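/- arXiv:1901.10631 — 4 statements merged into one kernel-verified Lean document; each statement's English description precedes it below -/
import Mathlib

section
/- For every integer d ≥ 2, let H_d be the hypercube graph: its vertex set is {0,1}^d and two vertices are adjacent if and only if they differ in exactly one coordinate, so H_d has n = 2^d vertices and d·2^{d−1} = (1/2)·n·log₂ n edges. Then there exists an injective embedding p of the vertices of H_d in ℝ² such that no three vertices of H_d are mapped by p to a common line, and for every subset S of the vertices with |S| ≥ 3, the framework (H_d[S], p|_S) is not rigid. -/
/-- Points of the plane `ℝ²` with the Euclidean norm. -/
abbrev Pt := EuclideanSpace ℝ (Fin 2)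

/-- Two frameworks `(G, p)` and `(G, q)` are equivalent if corresponding edge
lengths agree. -/
def FrameworkEquiv {V : Type*} (G : SimpleGraph V) (p q : V → Pt) : Prop :=
  ∀ i j, G.Adj i j → dist (p i) (p j) = dist (q i) (q j)

/-- Two embeddings `p, q : V → ℝ²` are congruent if all pairwise distances agree. -/
def FrameworkCongruent {V : Type*} (p q : V → Pt) : Prop :=
  ∀ i j, dist (p i) (p j) = dist (q i) (q j)

/-- A framework `(G, p)` is rigid if there is a neighborhood `B` of `p` in `(ℝ²)^V`
such that every `p' ∈ B` with `(G, p')` equivalent to `(G, p)` is congruent to `(G, p)`. -/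
def Rigid {V : Type*} (G : SimpleGraph V) (p : V → Pt) : Prop :=
  ∃ B ∈ nhds p, ∀ q ∈ B, FrameworkEquiv G p q → FrameworkCongruent p q

/-- The hypercube graph `H_d`: vertices are `{0,1}^d` and two vertices are adjacent
iff they differ in exactly one coordinate. -/
def hypercube (d : ℕ) : SimpleGraph (Fin d → Bool) where
  Adj u v := ∃ i, u i ≠ v i ∧ ∀ j, j ≠ i → u j = v j
  symm := by
    constructor
    rintro u v ⟨i, hi, hj⟩
    exact ⟨i, hi.symm, fun j hj' => (hj j hj').symm⟩
  loopless := by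
    constructor
    rintro u ⟨i, hi, -⟩
    exact hi rfl

/-!
Place the vertex `u` at `∑ⱼ uⱼ zⱼ`, where `zⱼ = 3 ^ j + (3 ^ d) ^ j • I` in `ℂ ≅ ℝ²`.
Differences of vertices are signed digit expansions: their real parts are nonzero base-`3`
expansions, and the cross product of the edge vectors `v - u`, `w - u` is a base-`3`
expansion with digits `(vⱼ - uⱼ)(wₖ - uₖ) - (wⱼ - uⱼ)(vₖ - uₖ) ∈ [-2, 2]` at position
`j + d k`, which vanishes only if `v - u` and `w - u` are parallel; three distinct cube
vertices never give that.

Any three vertices of `S` contain two, `a` and `b`, that differ in coordinates `i ≠ j`.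
Rotating `zᵢ` preserves every edge length of the hypercube (each edge vector is some `± zₖ`),
while `p a - p b = D ± zᵢ` with `D ≠ 0` because of coordinate `j`; rotating one summand of a sum
of two nonzero vectors changes its length at arbitrarily small angles.
-/

open Complex ComplexConjugate Filter Topology Function

section Frameworks

variable {V : Type*} {G : SimpleGraph V} {p : V → Pt}

theorem not_rigid_of_frequently_not_congruent (q : ℝ → V → Pt) (hq : Continuous q)
    (hq0 : q 0 = p) (hequiv : ∀ t, FrameworkEquiv G p (q t))
    (hflex : ∃ᶠ t in 𝓝 0, ¬FrameworkCongruent p (q t)) : ¬Rigid G p := by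
  rintro ⟨B, hB, hcong⟩
  have hnear : ∀ᶠ t in 𝓝 0, q t ∈ B := hq.continuousAt.preimage_mem_nhds (hq0 ▸ hB)
  exact hflex (hnear.mono fun t ht => not_not.mpr (hcong _ ht (hequiv t)))

theorem FrameworkEquiv.induce {q : V → Pt} (h : FrameworkEquiv G p q) (S : Set V) :
    FrameworkEquiv (G.induce S) (fun i : S => p i) (fun i : S => q i) :=
  fun i j hij => h i j hij

end Frameworks

namespace HypercubeFramework

section Digits

variable {B : ℤ}

theorem abs_sum_mul_pow_le (hB : 0 ≤ B) :
    ∀ {n : ℕ} (c : Fin n → ℤ), (∀ j, |c j| ≤ B - 1) → |∑ j, c j * B ^ (j : ℕ)| ≤ B ^ n - 1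
  | 0, _, _ => by simp
  | n + 1, c, hc => by
    rw [Fin.sum_univ_castSucc]
    simp only [Fin.val_castSucc, Fin.val_last]
    have hlow := abs_sum_mul_pow_le hB (fun j => c j.castSucc) fun j => hc _
    have htop : |c (Fin.last n) * B ^ n| ≤ (B - 1) * B ^ n := by
      rw [abs_mul, abs_pow, abs_of_nonneg hB]
      exact mul_le_mul_of_nonneg_right (hc _) (pow_nonneg hB n)
    calc _ ≤ |∑ j : Fin n, c j.castSucc * B ^ (j : ℕ)| + |c (Fin.last n) * B ^ n| :=
          abs_add_le _ _
      _ ≤ B ^ (n + 1) - 1 := by linear_combination hlow + htop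

theorem sum_mul_pow_ne_zero (hB : 0 < B) :
    ∀ {n : ℕ} (c : Fin n → ℤ), (∀ j, |c j| ≤ B - 1) → (∃ j, c j ≠ 0) →
      ∑ j, c j * B ^ (j : ℕ) ≠ 0
  | 0, _, _, ⟨j, _⟩ => j.elim0
  | n + 1, c, hc, ⟨j, hj⟩ => by
    rw [Fin.sum_univ_castSucc]
    simp only [Fin.val_castSucc, Fin.val_last]
    by_cases htop : c (Fin.last n) = 0
    · obtain ⟨j, rfl⟩ := Fin.exists_castSucc_eq.mpr fun h : j = Fin.last n => hj (h ▸ htop)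
      rw [htop, zero_mul, add_zero]
      exact sum_mul_pow_ne_zero hB (fun j => c j.castSucc) (fun j => hc _) ⟨j, hj⟩
    · have hlow := abs_sum_mul_pow_le hB.le (fun j => c j.castSucc) fun j => hc _
      have hBn : B ^ n ≤ |c (Fin.last n) * B ^ n| := by
        rw [abs_mul, abs_pow, abs_of_pos hB]
        exact le_mul_of_one_le_left (pow_nonneg hB.le n) (Int.one_le_abs htop)
      intro h
      rw [eq_neg_of_add_eq_zero_right h, abs_neg] at hBn
      linarith

theorem sum_sum_mul_pow_ne_zero (hB : 0 < B) {m n : ℕ} (a : Fin m → Fin n → ℤ)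
    (ha : ∀ k j, |a k j| ≤ B - 1) (hne : ∃ k j, a k j ≠ 0) :
    ∑ k, (∑ j, a k j * B ^ (j : ℕ)) * (B ^ n) ^ (k : ℕ) ≠ 0 := by
  obtain ⟨k, j, hkj⟩ := hne
  exact sum_mul_pow_ne_zero (pow_pos hB n) _ (fun k => abs_sum_mul_pow_le hB.le _ (ha k))
    ⟨k, sum_mul_pow_ne_zero hB _ (ha k) ⟨j, hkj⟩⟩

end Digits

section Plane

theorem im_conj_mul_eq_zero_of_collinear {V : Type*} [AddCommGroup V] [Module ℝ V]
    (f : ℂ ≃ₗ[ℝ] V) {A B C : ℂ} (h : Collinear ℝ {f A, f B, f C}) :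
    (conj (B - A) * (C - A)).im = 0 := by
  obtain ⟨v, hv⟩ := (collinear_iff_of_mem (Set.mem_insert _ _)).mp h
  obtain ⟨r, hr⟩ := hv (f B) (by simp)
  obtain ⟨s, hs⟩ := hv (f C) (by simp)
  have hB : B - A = r * f.symm v := by
    simpa [sub_eq_iff_eq_add, Complex.real_smul] using congrArg f.symm hr
  have hC : C - A = s * f.symm v := by
    simpa [sub_eq_iff_eq_add, Complex.real_smul] using congrArg f.symm hs
  rw [hB, hC]
  simp only [mul_im, mul_re, conj_re, conj_im, ofReal_re, ofReal_im]
  ring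

theorem im_conj_sum_mul_sum {ι : Type*} [Fintype ι] (c c' : ι → ℤ) (z : ι → ℂ) :
    (conj (∑ j, (c j : ℂ) * z j) * ∑ k, (c' k : ℂ) * z k).im =
      ∑ k, ∑ j, ((c j * c' k - c' j * c k : ℤ) : ℝ) * ((z j).re * (z k).im) := by
  calc _ = ∑ k, ∑ j, (c j * c' k : ℝ) * ((z j).re * (z k).im)
        - ∑ k, ∑ j, (c j * c' k : ℝ) * ((z j).im * (z k).re) := by
        simp only [map_sum, map_mul, map_intCast, Finset.sum_mul, Finset.mul_sum, im_sum, mul_im,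
          mul_re, conj_re, conj_im, intCast_re, intCast_im, ← Finset.sum_sub_distrib]
        refine Finset.sum_congr rfl fun k _ => Finset.sum_congr rfl fun j _ => ?_
        ring
    _ = _ := by
        rw [Finset.sum_comm (f := fun k j => (c j * c' k : ℝ) * ((z j).im * (z k).re)),
          ← Finset.sum_sub_distrib]
        refine Finset.sum_congr rfl fun k _ => ?_
        rw [← Finset.sum_sub_distrib]
        refine Finset.sum_congr rfl fun j _ => ?_
        push_cast
        ring

theorem eq_zero_of_eventually_re_mul_exp_eq {c : ℂ}
    (h : ∀ᶠ t : ℝ in 𝓝 0, (c * exp (t * I)).re = c.re) : c = 0 := by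
  have hneg : ∀ᶠ t : ℝ in 𝓝 0, (c * exp (↑(-t) * I)).re = c.re :=
    (continuous_neg.tendsto' 0 0 neg_zero).eventually h
  have hsmall : ∀ᶠ t in 𝓝[>] (0 : ℝ), 0 < t ∧ t < Real.pi :=
    (eventually_nhdsWithin_of_forall fun t ht => ht).and
      ((eventually_lt_nhds Real.pi_pos).filter_mono nhdsWithin_le_nhds)
  obtain ⟨t, ⟨ht0, htπ⟩, hplus, hminus⟩ :=
    (hsmall.and ((h.and hneg).filter_mono nhdsWithin_le_nhds)).exists
  simp only [mul_re, exp_ofReal_mul_I_re, exp_ofReal_mul_I_im, Real.cos_neg, Real.sin_neg]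
    at hplus hminus
  have hsin : 0 < Real.sin t := Real.sin_pos_of_pos_of_lt_pi ht0 htπ
  have him : c.im = 0 := by nlinarith
  have hcos : Real.cos t ≠ 1 := fun h1 => by
    nlinarith [Real.sin_sq_add_cos_sq t]
  have hre : c.re * (Real.cos t - 1) = 0 := by linarith
  exact Complex.ext ((mul_eq_zero.mp hre).resolve_right (sub_ne_zero.mpr hcos)) him

theorem frequently_norm_add_mul_exp_ne {D ζ : ℂ} (hD : D ≠ 0) (hζ : ζ ≠ 0) :
    ∃ᶠ t : ℝ in 𝓝 0, ‖D + ζ * exp (t * I)‖ ≠ ‖D + ζ‖ := by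
  refine fun h => mul_ne_zero hζ ((map_ne_zero conj).mpr hD) ?_
  refine eq_zero_of_eventually_re_mul_exp_eq (h.mono fun t ht => by
    have hsq := congrArg (· ^ 2) (not_not.mp ht)
    simp only [add_comm D, Complex.sq_norm, normSq_add, normSq_mul, normSq_eq_norm_sq (exp _),
      norm_exp_ofReal_mul_I, one_pow, mul_one] at hsq
    rw [mul_right_comm]
    linarith)

end Plane

section Cube

variable {d : ℕ}

def coordDiff (u v : Fin d → Bool) (j : Fin d) : ℤ := (u j).toNat - (v j).toNat

theorem abs_coordDiff_le_one (u v : Fin d → Bool) (j : Fin d) : |coordDiff u v j| ≤ 1 := by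
  unfold coordDiff; cases u j <;> cases v j <;> simp

theorem coordDiff_eq_zero_iff {u v : Fin d → Bool} {j : Fin d} :
    coordDiff u v j = 0 ↔ u j = v j := by
  unfold coordDiff; cases u j <;> cases v j <;> simp

theorem coordDiff_eq_coordDiff_iff {u v w : Fin d → Bool} {j : Fin d} :
    coordDiff v u j = coordDiff w u j ↔ v j = w j := by
  unfold coordDiff; cases u j <;> cases v j <;> cases w j <;> simp

theorem exists_coordDiff_mul_ne {u v w : Fin d → Bool} (huv : u ≠ v) (hvw : v ≠ w) (huw : u ≠ w) :
    ∃ k j, coordDiff v u j * coordDiff w u k - coordDiff w u j * coordDiff v u k ≠ 0 := by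
  obtain ⟨j, hj⟩ := Function.ne_iff.mp huv
  have hvj : coordDiff v u j ≠ 0 := coordDiff_eq_zero_iff.not.mpr (Ne.symm hj)
  by_cases hwj : w j = u j
  · obtain ⟨k, hk⟩ := Function.ne_iff.mp huw
    refine ⟨k, j, ?_⟩
    rw [coordDiff_eq_zero_iff.mpr hwj, zero_mul, sub_zero]
    exact mul_ne_zero hvj (coordDiff_eq_zero_iff.not.mpr (Ne.symm hk))
  · obtain ⟨k, hk⟩ := Function.ne_iff.mp hvw
    have hvwj : v j = w j := by revert hj hwj; cases u j <;> cases v j <;> cases w j <;> simp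
    refine ⟨k, j, ?_⟩
    rw [← coordDiff_eq_coordDiff_iff.mpr hvwj, ← mul_sub]
    exact mul_ne_zero hvj (sub_ne_zero.mpr (Ne.symm (coordDiff_eq_coordDiff_iff.not.mpr hk)))

theorem exists_mem_ne_ne_of_three_le_ncard {S : Set (Fin d → Bool)} (hS : 3 ≤ S.ncard) :
    ∃ a ∈ S, ∃ b ∈ S, ∃ i j, i ≠ j ∧ a i ≠ b i ∧ a j ≠ b j := by
  obtain ⟨u, v, w, hu, hv, hw, huv, huw, hvw⟩ := (Set.two_lt_ncard_iff S.toFinite).mp hS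
  obtain ⟨i, hi⟩ := Function.ne_iff.mp huv
  by_cases hv' : ∃ j, j ≠ i ∧ u j ≠ v j
  · obtain ⟨j, hji, hj⟩ := hv'
    exact ⟨u, hu, v, hv, i, j, hji.symm, hi, hj⟩
  obtain ⟨k, hk⟩ := Function.ne_iff.mp huw
  by_cases hw' : ∃ j, j ≠ k ∧ u j ≠ w j
  · obtain ⟨j, hjk, hj⟩ := hw'
    exact ⟨u, hu, w, hw, k, j, hjk.symm, hk, hj⟩
  push Not at hv' hw'
  by_cases hik : i = k
  · subst hik
    refine absurd (funext fun j => ?_) hvw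
    by_cases hji : j = i
    · subst hji; revert hi hk; cases u j <;> cases v j <;> cases w j <;> simp
    · rw [← hv' j hji, hw' j hji]
  · refine ⟨v, hv, w, hw, i, k, hik, ?_, ?_⟩
    · rwa [← hw' i hik, ne_comm]
    · rwa [← hv' k (Ne.symm hik)]

end Cube

section Embedding

variable {d : ℕ}

def cubeMap (z : Fin d → ℂ) (u : Fin d → Bool) : ℂ := ∑ j, ((u j).toNat : ℂ) * z j

theorem cubeMap_sub (z : Fin d → ℂ) (u v : Fin d → Bool) :
    cubeMap z u - cubeMap z v = ∑ j, (coordDiff u v j : ℂ) * z j := by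
  simp only [cubeMap, coordDiff, ← Finset.sum_sub_distrib, ← sub_mul, Int.cast_sub,
    Int.cast_natCast]

theorem norm_cubeMap_sub_of_adj {u v : Fin d → Bool} (h : (hypercube d).Adj u v) :
    ∃ k, ∀ z : Fin d → ℂ, ‖cubeMap z u - cubeMap z v‖ = ‖z k‖ := by
  obtain ⟨k, hk, hoff⟩ := h
  have hdiff : |coordDiff u v k| = 1 :=
    le_antisymm (abs_coordDiff_le_one u v k) (Int.one_le_abs (coordDiff_eq_zero_iff.not.mpr hk))
  refine ⟨k, fun z => ?_⟩
  rw [cubeMap_sub, Finset.sum_eq_single k (fun j _ hj => by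
    rw [coordDiff_eq_zero_iff.mpr (hoff j hj), Int.cast_zero, zero_mul]) (by simp), norm_mul,
    norm_intCast, ← Int.cast_abs, hdiff, Int.cast_one, one_mul]

theorem cubeMap_update (z : Fin d → ℂ) (i : Fin d) (ζ : ℂ) (u : Fin d → Bool) :
    cubeMap (update z i ζ) u = cubeMap z (update u i false) + (u i).toNat * ζ := by
  calc cubeMap (update z i ζ) u
      = ∑ j, (((update u i false j).toNat : ℂ) * z j + if j = i then (u i).toNat * ζ else 0) :=
        Finset.sum_congr rfl fun j _ => by by_cases hj : j = i <;> simp [hj]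
    _ = _ := by rw [Finset.sum_add_distrib, Finset.sum_ite_eq', if_pos (Finset.mem_univ i)]; rfl

noncomputable def planeCube (z : Fin d → ℂ) (u : Fin d → Bool) : Pt :=
  orthonormalBasisOneI.repr (cubeMap z u)

theorem dist_planeCube (z : Fin d → ℂ) (u v : Fin d → Bool) :
    dist (planeCube z u) (planeCube z v) = ‖cubeMap z u - cubeMap z v‖ := by
  rw [planeCube, planeCube, LinearIsometryEquiv.dist_map, dist_eq_norm]

theorem frameworkEquiv_planeCube {z w : Fin d → ℂ} (h : ∀ k, ‖w k‖ = ‖z k‖) :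
    FrameworkEquiv (hypercube d) (planeCube z) (planeCube w) := by
  intro u v huv
  obtain ⟨k, hk⟩ := norm_cubeMap_sub_of_adj huv
  rw [dist_planeCube, dist_planeCube, hk, hk, h]

theorem not_rigid_induce_planeCube {z : Fin d → ℂ} (hz : Injective (cubeMap z)) {i j : Fin d}
    (hzi : z i ≠ 0) (hji : j ≠ i) {S : Set (Fin d → Bool)} {a b : Fin d → Bool} (ha : a ∈ S)
    (hb : b ∈ S) (hai : a i ≠ b i) (haj : a j ≠ b j) :
    ¬Rigid ((hypercube d).induce S) (fun U : S => planeCube z U) := by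
  set flex : ℝ → Fin d → ℂ := fun t => update z i (z i * exp (t * I))
  have hflex0 : flex 0 = z := by simp [flex]
  set D := cubeMap z (update a i false) - cubeMap z (update b i false)
  set ζ : ℂ := ((a i).toNat - (b i).toNat) * z i
  have hD : D ≠ 0 := sub_ne_zero.mpr (hz.ne fun h => haj (by simpa [hji] using congrFun h j))
  have hζ : ζ ≠ 0 := mul_ne_zero (by revert hai; cases a i <;> cases b i <;> simp) hzi
  have hdist : ∀ t : ℝ,
      dist (planeCube (flex t) a) (planeCube (flex t) b) = ‖D + ζ * exp (t * I)‖ := by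
    intro t
    rw [dist_planeCube, cubeMap_update, cubeMap_update]
    congr 1
    ring
  have hdist0 := hdist 0
  rw [hflex0, ofReal_zero, zero_mul, exp_zero, mul_one] at hdist0
  refine not_rigid_of_frequently_not_congruent (fun t U => planeCube (flex t) U) ?_
    (by rw [hflex0]) (fun t => FrameworkEquiv.induce (frameworkEquiv_planeCube fun k => ?_) S) ?_
  · exact continuous_pi fun U => by simp only [planeCube, flex, cubeMap_update]; fun_prop
  · by_cases hk : k = i
    · subst hk; simp [flex, norm_exp_ofReal_mul_I]
    · simp [flex, hk]
  · refine (frequently_norm_add_mul_exp_ne hD hζ).mono fun t ht hcong => ht ?_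
    rw [← hdist t, ← hdist0]
    exact (hcong ⟨a, ha⟩ ⟨b, hb⟩).symm

def cubeVec (d : ℕ) (j : Fin d) : ℂ := ⟨3 ^ (j : ℕ), (3 ^ d) ^ (j : ℕ)⟩

theorem cubeVec_ne_zero (j : Fin d) : cubeVec d j ≠ 0 :=
  fun h => by simpa [cubeVec] using congrArg re h

theorem re_sum_mul_cubeVec (c : Fin d → ℤ) :
    (∑ j, (c j : ℂ) * cubeVec d j).re = ((∑ j, c j * 3 ^ (j : ℕ) : ℤ) : ℝ) := by
  simp [cubeVec, re_sum]

theorem injective_cubeMap_cubeVec : Injective (cubeMap (cubeVec d)) := by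
  intro u v h
  by_contra hne
  obtain ⟨j, hj⟩ := Function.ne_iff.mp hne
  have h0 := congrArg re (sub_eq_zero.mpr h)
  rw [cubeMap_sub, re_sum_mul_cubeVec, zero_re, Int.cast_eq_zero] at h0
  exact sum_mul_pow_ne_zero (by norm_num) _
    (fun j => (abs_coordDiff_le_one u v j).trans (by norm_num))
    ⟨j, coordDiff_eq_zero_iff.not.mpr hj⟩ h0

theorem not_collinear_planeCube_cubeVec {u v w : Fin d → Bool} (huv : u ≠ v) (hvw : v ≠ w)
    (huw : u ≠ w) :
    ¬Collinear ℝ {planeCube (cubeVec d) u, planeCube (cubeVec d) v, planeCube (cubeVec d) w} := by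
  intro h
  have him := im_conj_mul_eq_zero_of_collinear orthonormalBasisOneI.repr.toLinearEquiv h
  rw [cubeMap_sub, cubeMap_sub, im_conj_sum_mul_sum] at him
  set a : Fin d → Fin d → ℤ := fun k j =>
    coordDiff v u j * coordDiff w u k - coordDiff w u j * coordDiff v u k
  have hsum : ∑ k, ∑ j, (a k j : ℝ) * ((cubeVec d j).re * (cubeVec d k).im) =
      ((∑ k, (∑ j, a k j * 3 ^ (j : ℕ)) * (3 ^ d) ^ (k : ℕ) : ℤ) : ℝ) := by
    simp only [cubeVec, Int.cast_sum, Int.cast_mul, Int.cast_pow, Finset.sum_mul]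
    push_cast
    exact Finset.sum_congr rfl fun k _ => Finset.sum_congr rfl fun j _ => by ring
  have ha : ∀ k j, |a k j| ≤ 3 - 1 := fun k j => by
    have := abs_le.mp (abs_coordDiff_le_one v u j)
    have := abs_le.mp (abs_coordDiff_le_one w u j)
    have := abs_le.mp (abs_coordDiff_le_one v u k)
    have := abs_le.mp (abs_coordDiff_le_one w u k)
    exact abs_le.mpr ⟨by nlinarith, by nlinarith⟩
  rw [hsum, Int.cast_eq_zero] at him
  exact sum_sum_mul_pow_ne_zero (by norm_num) a ha (exists_coordDiff_mul_ne huv hvw huw) him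

end Embedding

end HypercubeFramework

open HypercubeFramework

/-- **Theorem 2.** For every `d ≥ 2` there is an injective embedding `p` of the
hypercube graph `H_d` (which has `n = 2^d` vertices and `(1/2)·n·log₂ n` edges)
in `ℝ²` with no three vertices on a common line, such that every subframework on at
least three vertices is non-rigid. -/
theorem hypercube_embedding_no_rigid_part :
    ∀ d : ℕ, 2 ≤ d →
      ∃ p : (Fin d → Bool) → Pt,
        Function.Injective p ∧
        (∀ u v w : Fin d → Bool, u ≠ v → v ≠ w → u ≠ w →
          ¬ Collinear ℝ ({p u, p v, p w} : Set Pt)) ∧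
        ∀ S : Set (Fin d → Bool), 3 ≤ S.ncard →
          ¬ Rigid ((hypercube d).induce S) (fun i : S => p i.1) := by
  intro d _
  refine ⟨planeCube (cubeVec d), orthonormalBasisOneI.repr.injective.comp
    injective_cubeMap_cubeVec, fun u v w => not_collinear_planeCube_cubeVec, fun S hS => ?_⟩
  obtain ⟨a, ha, b, hb, i, j, hij, hai, haj⟩ := exists_mem_ne_ne_of_three_le_ncard hS
  exact not_rigid_induce_planeCube injective_cubeMap_cubeVec (cubeVec_ne_zero i) hij.symm ha hb
    hai haj
end

section
/- Let (a,b) and (c,d) be two pairs of points of ℝ² with a ≠ b, c ≠ d and (a,b) ≠ (c,d). Then ‖a − c‖ = ‖b − d‖ if and only if the lines ℓ_{a,b} and ℓ_{c,d} in ℝ³ either intersect or are parallel (i.e., ℓ_{a,b} ∩ ℓ_{c,d} ≠ ∅, or the two lines are disjoint with parallel direction vectors). -/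
/-- Counterclockwise rotation of a vector of `ℝ²` by `π/2`: `(x, y)^⊥ = (-y, x)`. -/
noncomputable def perp (v : Pt) : Pt := WithLp.toLp 2 ![-(v 1), v 0]

/-- The line `ℓ_{a,b} = { ((a+b)/2 + t·((a−b)/2)^⊥, t) : t ∈ ℝ }` in `ℝ³ = ℝ² × ℝ`. -/
noncomputable def lineOf (a b : Pt) : Set (Pt × ℝ) :=
  {x | ∃ t : ℝ, x = ((2⁻¹ : ℝ) • (a + b) + t • perp ((2⁻¹ : ℝ) • (a - b)), t)}

/-- The direction vector `(((a−b)/2)^⊥, 1)` of the line `ℓ_{a,b}`. -/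
noncomputable def dirOf (a b : Pt) : Pt × ℝ := (perp ((2⁻¹ : ℝ) • (a - b)), 1)

/-! Put `p = (c + d) - (a + b)` and `q = (a - b) - (c - d)`. The lines meet at height `t` iff
`p = t • q^⊥`, and their direction vectors are parallel iff `q = 0`. Polarization gives
`‖a - c‖² - ‖b - d‖² = -⟪p, q⟫`, and in the plane `p ⊥ q` holds exactly when `q = 0` or `p` is
a multiple of `q^⊥`. -/

open scoped RealInnerProductSpace

lemma Pt.norm_sq_eq (x : Pt) : ‖x‖ ^ 2 = x 0 ^ 2 + x 1 ^ 2 := by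
  simp [EuclideanSpace.real_norm_sq_eq, Fin.sum_univ_two]

lemma Pt.real_inner_eq (x y : Pt) : ⟪x, y⟫ = x 0 * y 0 + x 1 * y 1 := by
  simp [PiLp.inner_apply, Fin.sum_univ_two, mul_comm]

@[simp] lemma perp_apply_zero (v : Pt) : perp v 0 = -v 1 := rfl
@[simp] lemma perp_apply_one (v : Pt) : perp v 1 = v 0 := rfl

lemma perp_sub (v w : Pt) : perp (v - w) = perp v - perp w := by
  ext i
  fin_cases i <;> simp only [Fin.zero_eta, Fin.mk_one, perp_apply_zero, perp_apply_one,
    PiLp.sub_apply]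
  ring

lemma perp_smul (r : ℝ) (v : Pt) : perp (r • v) = r • perp v := by
  ext i; fin_cases i <;> simp

lemma perp_injective : Function.Injective perp := by
  intro v w h
  ext i; fin_cases i
  · simpa using congrArg (· 1) h
  · simpa using congrArg (· 0) h

lemma real_inner_perp_self (v : Pt) : ⟪perp v, v⟫ = 0 := by
  rw [Pt.real_inner_eq, perp_apply_zero, perp_apply_one]
  ring

lemma real_inner_eq_zero_iff_exists_eq_smul_perp_or_eq_zero (p q : Pt) :
    ⟪p, q⟫ = 0 ↔ (∃ t : ℝ, p = t • perp q) ∨ q = 0 := by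
  refine ⟨fun h => or_iff_not_imp_right.mpr fun hq => ?_, ?_⟩
  · have hq2 : q 0 ^ 2 + q 1 ^ 2 ≠ 0 := by
      rwa [← Pt.norm_sq_eq, pow_ne_zero_iff two_ne_zero, norm_ne_zero_iff]
    rw [Pt.real_inner_eq] at h
    refine ⟨⟪p, perp q⟫ / ‖q‖ ^ 2, ?_⟩
    rw [Pt.real_inner_eq, Pt.norm_sq_eq]
    ext i
    fin_cases i <;> simp only [Fin.zero_eta, Fin.mk_one, perp_apply_zero, perp_apply_one,
      PiLp.smul_apply, smul_eq_mul] <;> field_simp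
    · linear_combination q 0 * h
    · linear_combination q 1 * h
  · rintro (⟨t, rfl⟩ | rfl)
    · rw [real_inner_smul_left, real_inner_perp_self, mul_zero]
    · exact inner_zero_right _

lemma norm_sub_eq_norm_sub_iff_real_inner_eq_zero {E : Type*} [NormedAddCommGroup E]
    [InnerProductSpace ℝ E] (a b c d : E) :
    ‖a - c‖ = ‖b - d‖ ↔ ⟪(c + d) - (a + b), (a - b) - (c - d)⟫ = 0 := by
  rw [← real_inner_add_sub_eq_zero_iff, show a - c + (b - d) = -((c + d) - (a + b)) by abel,
    show a - c - (b - d) = (a - b) - (c - d) by abel, inner_neg_left, neg_eq_zero]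

lemma lineOf_inter_nonempty_iff (a b c d : Pt) :
    (lineOf a b ∩ lineOf c d).Nonempty ↔
      ∃ t : ℝ, (c + d) - (a + b) = t • perp ((a - b) - (c - d)) := by
  constructor
  · rintro ⟨x, ⟨t, rfl⟩, s, hs⟩
    obtain ⟨hx, rfl⟩ := Prod.mk.inj hs
    refine ⟨t, ?_⟩
    simp only [perp_sub, perp_smul] at hx ⊢
    linear_combination (norm := module) (-2 : ℝ) • hx
  · rintro ⟨t, ht⟩
    refine ⟨_, ⟨t, rfl⟩, t, ?_⟩
    simp only [perp_sub, perp_smul] at ht ⊢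
    congr 1
    linear_combination (norm := module) (-2⁻¹ : ℝ) • ht

lemma exists_dirOf_eq_smul_dirOf_iff (a b c d : Pt) :
    (∃ s : ℝ, s ≠ 0 ∧ dirOf a b = s • dirOf c d) ↔ a - b = c - d := by
  refine ⟨fun ⟨s, _, h⟩ => ?_, fun h => ⟨1, one_ne_zero, by simp [dirOf, h]⟩⟩
  obtain ⟨h1, h2⟩ := Prod.ext_iff.mp h
  obtain rfl : s = 1 := by simpa [dirOf] using h2.symm
  exact smul_right_injective Pt (inv_ne_zero (two_ne_zero (α := ℝ)))
    (perp_injective (by simpa [dirOf] using h1))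

theorem dist_eq_iff_lines_intersect_or_parallel_general
    (a b c d : Pt) :
    ‖a - c‖ = ‖b - d‖ ↔
      ((lineOf a b ∩ lineOf c d).Nonempty ∨
        (Disjoint (lineOf a b) (lineOf c d) ∧
          ∃ s : ℝ, s ≠ 0 ∧ dirOf a b = s • dirOf c d)) := by
  rw [norm_sub_eq_norm_sub_iff_real_inner_eq_zero,
    real_inner_eq_zero_iff_exists_eq_smul_perp_or_eq_zero, ← lineOf_inter_nonempty_iff,
    exists_dirOf_eq_smul_dirOf_iff, sub_eq_zero, ← Set.not_disjoint_iff_nonempty_inter]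
  tauto

/-- For pairs `(a,b) ≠ (c,d)` of points of `ℝ²` with `a ≠ b` and `c ≠ d`,
one has `‖a − c‖ = ‖b − d‖` iff the lines `ℓ_{a,b}` and `ℓ_{c,d}` intersect or are
parallel (disjoint with parallel direction vectors). -/
theorem dist_eq_iff_lines_intersect_or_parallel
    (a b c d : Pt) (hab : a ≠ b) (hcd : c ≠ d) (hne : (a, b) ≠ (c, d)) :
    ‖a - c‖ = ‖b - d‖ ↔
      ((lineOf a b ∩ lineOf c d).Nonempty ∨
        (Disjoint (lineOf a b) (lineOf c d) ∧
          ∃ s : ℝ, s ≠ 0 ∧ dirOf a b = s • dirOf c d)) :=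
  dist_eq_iff_lines_intersect_or_parallel_general a b c d
end

section
/- Let r ≥ 3 and let a₁,…,a_r, b₁,…,b_r ∈ ℝ², and consider the lines ℓ_{a_i,b_i} in ℝ³ for i = 1,…,r. If all the lines ℓ_{a_1,b_1},…,ℓ_{a_r,b_r} lie in a common plane of ℝ³, then there exists an orientation-reversing isometry T of ℝ² (i.e., an isometry whose linear part has determinant −1) such that T(a_i) = b_i for every i = 1,…,r; in particular the sequences (a₁,…,a_r) and (b₁,…,b_r) are congruent. -/
/-- `T : ℝ² → ℝ²` is an isometry (a distance-preserving bijection of the plane,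
hence affine with norm-preserving linear part) with linear part of determinant
`e ∈ {1, -1}`. -/
def IsIsometryWithDet (e : ℝ) (T : Pt → Pt) : Prop :=
  ∃ (A : Pt →ₗ[ℝ] Pt) (w : Pt),
    (∀ x : Pt, ‖A x‖ = ‖x‖) ∧ LinearMap.det A = e ∧ ∀ x : Pt, T x = A x + w

open Submodule InnerProductSpace

theorem AffineSubspace.exists_dual_ne_zero_forall_mem_eq {K V : Type*} [DivisionRing K]
    [AddCommGroup V] [Module K V] (P : AffineSubspace K V) (hP : P.direction ≠ ⊤) :
    ∃ φ : Module.Dual K V, φ ≠ 0 ∧ ∃ k : K, ∀ x ∈ P, φ x = k := by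
  obtain ⟨φ, hφ, hφP⟩ := exists_dual_map_eq_bot_of_lt_top hP.lt_top inferInstance
  refine ⟨φ, hφ, ?_⟩
  rcases (P : Set V).eq_empty_or_nonempty with hempty | ⟨p, hp⟩
  · exact ⟨0, fun x hx => (Set.eq_empty_iff_forall_notMem.1 hempty x hx).elim⟩
  refine ⟨φ p, fun x hx => ?_⟩
  have : φ (x -ᵥ p) ∈ P.direction.map φ := Submodule.mem_map_of_mem (P.vsub_mem_direction hx hp)
  rwa [hφP, mem_bot, vsub_eq_sub, map_sub, sub_eq_zero] at this

theorem LinearMap.exists_inner_add_mul_eq {E : Type*} [NormedAddCommGroup E]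
    [InnerProductSpace ℝ E] [FiniteDimensional ℝ E] (φ : E × ℝ →ₗ[ℝ] ℝ) :
    ∃ (u : E) (c : ℝ), ∀ y t, φ (y, t) = ⟪u, y⟫_ℝ + c * t := by
  refine ⟨(toDual ℝ E).symm (φ ∘ₗ LinearMap.inl ℝ E ℝ).toContinuousLinearMap, φ (0, 1),
    fun y t => ?_⟩
  have : (y, t) = (y, 0) + t • ((0 : E), (1 : ℝ)) := by simp
  rw [toDual_symm_apply, this, map_add, map_smul]
  simp [mul_comm]

lemma perp_zero : perp 0 = 0 := by
  ext i
  fin_cases i <;> simp [perp]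

lemma perp_smul_s5 (c : ℝ) (z : Pt) : perp (c • z) = c • perp z := by
  ext i
  fin_cases i <;> simp [perp]

lemma inner_perp_right (u z : Pt) : ⟪u, perp z⟫_ℝ = -⟪perp u, z⟫_ℝ := by
  simp [perp, PiLp.inner_apply, Fin.sum_univ_two]

lemma inner_perp_perp (u z : Pt) : ⟪perp u, perp z⟫_ℝ = ⟪u, z⟫_ℝ := by
  simp [perp, PiLp.inner_apply, Fin.sum_univ_two]
  ring

lemma inner_perp_self (u : Pt) : ⟪u, perp u⟫_ℝ = 0 := by
  simp [perp, PiLp.inner_apply, Fin.sum_univ_two]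
  ring

lemma eq_of_inner_eq_of_inner_perp_eq {u x y : Pt} (hu : u ≠ 0) (h : ⟪u, x⟫_ℝ = ⟪u, y⟫_ℝ)
    (h' : ⟪perp u, x⟫_ℝ = ⟪perp u, y⟫_ℝ) : x = y := by
  have hu' : u 0 ^ 2 + u 1 ^ 2 ≠ 0 := by
    simpa [EuclideanSpace.norm_sq_eq, Fin.sum_univ_two] using pow_ne_zero 2 (norm_ne_zero_iff.2 hu)
  simp only [perp, PiLp.inner_apply, Fin.sum_univ_two, RCLike.inner_apply, Real.ringHom_apply,
    Matrix.cons_val_zero, Matrix.cons_val_one, Matrix.cons_val_fin_one] at h h'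
  have h0 : x 0 = y 0 := mul_left_cancel₀ hu' (by linear_combination u 0 * h - u 1 * h')
  have h1 : x 1 = y 1 := mul_left_cancel₀ hu' (by linear_combination u 1 * h + u 0 * h')
  ext i
  fin_cases i
  exacts [h0, h1]

lemma inner_eq_of_lineOf_subset {a b u : Pt} {c k : ℝ}
    (h : lineOf a b ⊆ {x | ⟪u, x.1⟫_ℝ + c * x.2 = k}) :
    ⟪u, a + b⟫_ℝ = 2 * k ∧ ⟪perp u, a - b⟫_ℝ = 2 * c := by
  have h₀ := h ⟨0, rfl⟩
  have h₁ := h ⟨1, rfl⟩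
  simp only [Set.mem_ofPred_eq, inner_add_right, inner_smul_right, perp_smul_s5, inner_perp_right,
    zero_smul, one_smul, inner_zero_right] at h₀ h₁ ⊢
  constructor <;> linarith

namespace Submodule

variable {𝕜 E : Type*} [RCLike 𝕜] [NormedAddCommGroup E] [InnerProductSpace 𝕜 E]
  {K : Submodule 𝕜 E} [K.HasOrthogonalProjection] {v : E}

theorem inner_reflection_right_of_mem (hv : v ∈ K) (x : E) :
    ⟪v, K.reflection x⟫_𝕜 = ⟪v, x⟫_𝕜 := by
  rw [← K.reflection.inner_map_map, reflection_reflection, reflection_mem_subspace_eq_self hv]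

theorem inner_reflection_right_of_mem_orthogonal (hv : v ∈ Kᗮ) (x : E) :
    ⟪v, K.reflection x⟫_𝕜 = -⟪v, x⟫_𝕜 := by
  rw [← K.reflection.inner_map_map, reflection_reflection,
    reflection_mem_subspace_orthogonalComplement_eq_neg hv, inner_neg_left]

end Submodule

lemma eq_reflection_add_of_inner_eq {u a b : Pt} {c k : ℝ} (hu : u ≠ 0)
    (hk : ⟪u, a + b⟫_ℝ = 2 * k) (hc : ⟪perp u, a - b⟫_ℝ = 2 * c) :
    b = (ℝ ∙ u)ᗮ.reflection a + ((2 * k / ‖u‖ ^ 2) • u - (2 * c / ‖u‖ ^ 2) • perp u) := by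
  have hu_mem : u ∈ (ℝ ∙ u)ᗮᗮ := le_orthogonal_orthogonal _ (mem_span_singleton_self u)
  have hperp_mem : perp u ∈ (ℝ ∙ u)ᗮ :=
    mem_orthogonal_singleton_iff_inner_right.2 (inner_perp_self u)
  have hnorm : ‖u‖ ^ 2 ≠ 0 := by positivity
  rw [inner_add_right] at hk
  rw [inner_sub_right] at hc
  refine eq_of_inner_eq_of_inner_perp_eq hu ?_ ?_
  · rw [inner_add_right, inner_reflection_right_of_mem_orthogonal hu_mem, inner_sub_right,
      inner_smul_right, inner_smul_right, real_inner_self_eq_norm_sq, inner_perp_self]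
    field_simp
    linear_combination ‖u‖ ^ 2 * hk
  · rw [inner_add_right, inner_reflection_right_of_mem hperp_mem, inner_sub_right,
      inner_smul_right, inner_smul_right, real_inner_comm u, inner_perp_self, inner_perp_perp,
      real_inner_self_eq_norm_sq]
    field_simp
    linear_combination -‖u‖ ^ 2 * hc

lemma isIsometryWithDet_reflection_add {u : Pt} (hu : u ≠ 0) (w : Pt) :
    IsIsometryWithDet (-1) (fun x => (ℝ ∙ u)ᗮ.reflection x + w) :=
  ⟨(ℝ ∙ u)ᗮ.reflection.toLinearMap, w, (ℝ ∙ u)ᗮ.reflection.norm_map, by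
    rw [det_reflection, orthogonal_orthogonal, finrank_span_singleton hu, pow_one],
    fun _ => rfl⟩

lemma IsIsometryWithDet.dist_map {e : ℝ} {T : Pt → Pt} (hT : IsIsometryWithDet e T)
    (x y : Pt) : dist (T x) (T y) = dist x y := by
  obtain ⟨A, w, hA, -, hTA⟩ := hT
  rw [hTA, hTA, dist_add_right, dist_eq_norm, dist_eq_norm, ← map_sub, hA]

/-- **Lemma 2.1(b).** If `r ≥ 3` and the lines `ℓ_{a_i, b_i}`, `i = 1, …, r`, all
lie in a common plane (2-dimensional affine subspace) of `ℝ³`, then there is an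
orientation-reversing isometry `T` of `ℝ²` (determinant of the linear part equal to
`-1`) with `T(a_i) = b_i` for all `i`; in particular `(a_i)` and `(b_i)` are
congruent. -/
theorem coplanar_lines_orientation_reversing_congruence
    (r : ℕ) (hr : 3 ≤ r) (a b : Fin r → Pt)
    (h : ∃ P : AffineSubspace ℝ (Pt × ℝ), Module.finrank ℝ P.direction = 2 ∧
      ∀ i : Fin r, lineOf (a i) (b i) ⊆ (P : Set (Pt × ℝ))) :
    ∃ T : Pt → Pt, IsIsometryWithDet (-1) T ∧ (∀ i : Fin r, T (a i) = b i) ∧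
      ∀ i j : Fin r, dist (a i) (a j) = dist (b i) (b j) := by
  obtain ⟨P, hdim, hsub⟩ := h
  have hP : P.direction ≠ ⊤ := by
    intro htop
    rw [htop, finrank_top, Module.finrank_prod, finrank_euclideanSpace_fin,
      Module.finrank_self] at hdim
    omega
  obtain ⟨φ, hφ, k, hφP⟩ := P.exists_dual_ne_zero_forall_mem_eq hP
  obtain ⟨u, c, hφuc⟩ := φ.exists_inner_add_mul_eq
  have hline (i : Fin r) : ⟪u, a i + b i⟫_ℝ = 2 * k ∧ ⟪perp u, a i - b i⟫_ℝ = 2 * c :=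
    inner_eq_of_lineOf_subset fun x hx => by simpa [← hφuc] using hφP x (hsub i hx)
  have hu : u ≠ 0 := by
    rintro rfl
    have hc : c = 0 := by simpa [perp_zero] using (hline ⟨0, by omega⟩).2
    exact hφ (LinearMap.ext fun ⟨y, t⟩ => by simp [hφuc, hc])
  set T := fun x => (ℝ ∙ u)ᗮ.reflection x + ((2 * k / ‖u‖ ^ 2) • u - (2 * c / ‖u‖ ^ 2) • perp u)
  have hT : IsIsometryWithDet (-1) T := isIsometryWithDet_reflection_add hu _
  have hTab (i : Fin r) : T (a i) = b i :=
    (eq_reflection_add_of_inner_eq hu (hline i).1 (hline i).2).symm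
  exact ⟨T, hT, hTab, fun i j => by rw [← hTab, ← hTab, hT.dist_map]⟩
end

section
/- Let d ≥ 1 and let p = (p₁,…,p_{d+1}) and p' = (p₁',…,p_{d+1}') be two (d+1)-tuples of points of ℝ^d, each affinely independent (in general position). Define Σ = { (q,q') ∈ ℝ^d × ℝ^d : ‖p_i − q‖ = ‖p_i' − q'‖ for all i = 1,…,d+1 }, and let σ (resp. σ') be the projection of Σ to the first (resp. second) factor ℝ^d. Then there exists an invertible affine transformation T : ℝ^d → ℝ^d such that: (i) for all q, q' ∈ ℝ^d, (q,q') ∈ Σ if and only if q ∈ σ and q' = T(q); (ii) T(σ) = σ'; and (iii) σ is the zero set of a polynomial in d variables of total degree at most 2 (a quadric). -/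
/-!
Subtracting the equation `‖p₀ - q‖² = ‖p₀' - q'‖²` from the others turns `Σ` into the linear
system `⟪pᵢ' - p₀', q'⟫ = ⟪pᵢ - p₀, q⟫ + cᵢ` (`i ≠ 0`) together with that single quadratic
equation. Both families of edge vectors `pᵢ - p₀` and `pᵢ' - p₀'` are bases, so the linear system
says exactly that `q' = A q + w` for an invertible affine map, and then `σ` is the quadric
`‖p₀ - q‖² = ‖p₀' - (A q + w)‖²`.
-/

open Module MvPolynomial InnerProductSpace RealInnerProductSpace

/-- `Σ_{p,p'} = {(q,q') ∈ ℝ^d × ℝ^d : ‖p_i − q‖ = ‖p_i' − q'‖ for i = 1, …, d+1}`. -/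
def SigmaSet (d : ℕ) (p p' : Fin (d + 1) → EuclideanSpace ℝ (Fin d)) :
    Set (EuclideanSpace ℝ (Fin d) × EuclideanSpace ℝ (Fin d)) :=
  {qq | ∀ i : Fin (d + 1), dist (p i) qq.1 = dist (p' i) qq.2}

section InnerCoordinates

variable {E : Type*} [NormedAddCommGroup E] [InnerProductSpace ℝ E]

theorem dist_eq_dist_iff_inner_eq {a a₀ a' a₀' q q' : E} (h₀ : dist a₀ q = dist a₀' q') :
    dist a q = dist a' q' ↔
      ⟪a' - a₀', q'⟫ = ⟪a - a₀, q⟫ + (‖a'‖ ^ 2 - ‖a₀'‖ ^ 2 - (‖a‖ ^ 2 - ‖a₀‖ ^ 2)) / 2 := by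
  rw [← sq_eq_sq₀ dist_nonneg dist_nonneg]
  rw [← sq_eq_sq₀ dist_nonneg dist_nonneg] at h₀
  simp only [dist_eq_norm, norm_sub_sq_real, inner_sub_left] at h₀ ⊢
  constructor <;> intro h <;> linarith

theorem forall_dist_eq_iff {ι : Type*} (p p' : ι → E) (i₀ : ι) (q q' : E) :
    (∀ i, dist (p i) q = dist (p' i) q') ↔ dist (p i₀) q = dist (p' i₀) q' ∧
      ∀ i : {i // i ≠ i₀}, ⟪p' i - p' i₀, q'⟫ =
        ⟪p i - p i₀, q⟫ + (‖p' i‖ ^ 2 - ‖p' i₀‖ ^ 2 - (‖p i‖ ^ 2 - ‖p i₀‖ ^ 2)) / 2 := by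
  refine ⟨fun h => ⟨h i₀, fun i => (dist_eq_dist_iff_inner_eq (h i₀)).1 (h i)⟩, ?_⟩
  rintro ⟨h₀, h⟩ i
  rcases eq_or_ne i i₀ with rfl | hi
  · exact h₀
  · exact (dist_eq_dist_iff_inner_eq h₀).2 (h ⟨i, hi⟩)

variable [FiniteDimensional ℝ E] {ι : Type*} [Fintype ι]

theorem LinearIndependent.bijective_pi_innerₛₗ {v : ι → E} (hv : LinearIndependent ℝ v)
    (hcard : Fintype.card ι = finrank ℝ E) :
    Function.Bijective (LinearMap.pi fun i => innerₛₗ ℝ (v i)) := by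
  have hinj : Function.Injective (LinearMap.pi fun i => innerₛₗ ℝ (v i)) := fun x y hxy =>
    ext_inner_left_basis (basisOfLinearIndependentOfCardEqFinrank' v hv hcard) fun i => by
      simpa using congrFun hxy i
  exact ⟨hinj, (LinearMap.injective_iff_surjective_of_finrank_eq_finrank (by simp [hcard])).1 hinj⟩

theorem exists_linearEquiv_forall_inner_eq_iff {v v' : ι → E} (hv : LinearIndependent ℝ v)
    (hv' : LinearIndependent ℝ v') (hcard : Fintype.card ι = finrank ℝ E) (c : ι → ℝ) :
    ∃ (A : E ≃ₗ[ℝ] E) (w : E), ∀ q q', (∀ i, ⟪v' i, q'⟫ = ⟪v i, q⟫ + c i) ↔ q' = A q + w := by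
  let G := LinearEquiv.ofBijective _ (hv.bijective_pi_innerₛₗ hcard)
  let G' := LinearEquiv.ofBijective _ (hv'.bijective_pi_innerₛₗ hcard)
  refine ⟨G.trans G'.symm, G'.symm c, fun q q' => ?_⟩
  rw [← G'.injective.eq_iff, map_add]
  simp [G, G', funext_iff]

end InnerCoordinates

section GraphImage

variable {α β : Type*} {S : Set (α × β)} {f : α → β}

theorem mem_iff_mem_image_fst_and_eq (hS : ∀ x y, (x, y) ∈ S → y = f x) {x : α} {y : β} :
    (x, y) ∈ S ↔ x ∈ Prod.fst '' S ∧ y = f x := by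
  refine ⟨fun h => ⟨⟨_, h, rfl⟩, hS x y h⟩, ?_⟩
  rintro ⟨⟨⟨x, y'⟩, h, rfl⟩, rfl⟩
  rwa [← hS x y' h]

theorem image_image_fst_eq_image_snd (hS : ∀ x y, (x, y) ∈ S → y = f x) :
    f '' (Prod.fst '' S) = Prod.snd '' S := by
  rw [Set.image_image]
  exact Set.image_congr fun xy h => (hS xy.1 xy.2 h).symm

end GraphImage

def IsPolynomialOfDegreeLE {d : ℕ} (n : ℕ) (g : EuclideanSpace ℝ (Fin d) → ℝ) : Prop :=
  ∃ f : MvPolynomial (Fin d) ℝ, f.totalDegree ≤ n ∧ ∀ q, eval (fun i => q i) f = g q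

namespace IsPolynomialOfDegreeLE

variable {d m n : ℕ} {g h : EuclideanSpace ℝ (Fin d) → ℝ}

theorem const (n : ℕ) (c : ℝ) : IsPolynomialOfDegreeLE (d := d) n fun _ => c :=
  ⟨C c, by simp, by simp⟩

theorem coord (k : Fin d) : IsPolynomialOfDegreeLE 1 fun q : EuclideanSpace ℝ (Fin d) => q k :=
  ⟨X k, by simp, by simp⟩

theorem add (hg : IsPolynomialOfDegreeLE n g) (hh : IsPolynomialOfDegreeLE n h) :
    IsPolynomialOfDegreeLE n fun q => g q + h q := by
  obtain ⟨f, hf, hfg⟩ := hg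
  obtain ⟨f', hf', hfh⟩ := hh
  exact ⟨f + f', (totalDegree_add _ _).trans (max_le hf hf'), by simp [hfg, hfh]⟩

theorem sub (hg : IsPolynomialOfDegreeLE n g) (hh : IsPolynomialOfDegreeLE n h) :
    IsPolynomialOfDegreeLE n fun q => g q - h q := by
  obtain ⟨f, hf, hfg⟩ := hg
  obtain ⟨f', hf', hfh⟩ := hh
  exact ⟨f - f', (totalDegree_sub _ _).trans (max_le hf hf'), by simp [hfg, hfh]⟩

theorem mul (hg : IsPolynomialOfDegreeLE m g) (hh : IsPolynomialOfDegreeLE n h) :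
    IsPolynomialOfDegreeLE (m + n) fun q => g q * h q := by
  obtain ⟨f, hf, hfg⟩ := hg
  obtain ⟨f', hf', hfh⟩ := hh
  exact ⟨f * f', (totalDegree_mul _ _).trans (add_le_add hf hf'), by simp [hfg, hfh]⟩

theorem const_mul (c : ℝ) (hg : IsPolynomialOfDegreeLE n g) :
    IsPolynomialOfDegreeLE n fun q => c * g q := by
  simpa using (const 0 c).mul hg

theorem sum {ι : Type*} [Fintype ι] {g : ι → EuclideanSpace ℝ (Fin d) → ℝ}
    (hg : ∀ i, IsPolynomialOfDegreeLE n (g i)) :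
    IsPolynomialOfDegreeLE n fun q => ∑ i, g i q := by
  choose f hf hfg using hg
  exact ⟨∑ i, f i, (totalDegree_finsetSum _ _).trans (Finset.sup_le fun i _ => hf i),
    by simp [hfg]⟩

theorem linearMap (ℓ : EuclideanSpace ℝ (Fin d) →ₗ[ℝ] ℝ) : IsPolynomialOfDegreeLE 1 ℓ := by
  have hℓ : ⇑ℓ = fun q => ∑ k, ℓ (EuclideanSpace.single k 1) * q k := by
    ext q
    conv_lhs => rw [← (EuclideanSpace.basisFun (Fin d) ℝ).sum_repr q]
    simp [mul_comm]
  rw [hℓ]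
  exact sum fun k => const_mul _ (coord k)

theorem linearMap_add_coord (A : EuclideanSpace ℝ (Fin d) →ₗ[ℝ] EuclideanSpace ℝ (Fin m))
    (w : EuclideanSpace ℝ (Fin m)) (j : Fin m) :
    IsPolynomialOfDegreeLE 1 fun q => (A q + w) j := by
  simpa using (linearMap ((EuclideanSpace.proj j).toLinearMap ∘ₗ A)).add (const 1 (w j))

theorem dist_sq {φ : EuclideanSpace ℝ (Fin d) → EuclideanSpace ℝ (Fin m)}
    (hφ : ∀ j, IsPolynomialOfDegreeLE 1 fun q => φ q j) (b : EuclideanSpace ℝ (Fin m)) :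
    IsPolynomialOfDegreeLE 2 fun q => dist b (φ q) ^ 2 := by
  have hdist : (fun q => dist b (φ q) ^ 2) = fun q => ∑ j, (b j - φ q j) * (b j - φ q j) := by
    ext q
    rw [EuclideanSpace.dist_eq, Real.sq_sqrt (by positivity)]
    simp [Real.dist_eq, sq]
  rw [hdist]
  exact sum fun j => ((const 1 (b j)).sub (hφ j)).mul ((const 1 (b j)).sub (hφ j))

end IsPolynomialOfDegreeLE

theorem sigma_quadric_and_affine_map_general
    (d : ℕ) (p p' : Fin (d + 1) → EuclideanSpace ℝ (Fin d))
    (hp : AffineIndependent ℝ p) (hp' : AffineIndependent ℝ p') :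
    ∃ (A : EuclideanSpace ℝ (Fin d) →ₗ[ℝ] EuclideanSpace ℝ (Fin d))
      (w : EuclideanSpace ℝ (Fin d)),
      Function.Bijective A ∧
      (∀ q q' : EuclideanSpace ℝ (Fin d),
        (q, q') ∈ SigmaSet d p p' ↔
          q ∈ Prod.fst '' SigmaSet d p p' ∧ q' = A q + w) ∧
      ((fun q => A q + w) '' (Prod.fst '' SigmaSet d p p') =
        Prod.snd '' SigmaSet d p p') ∧
      ∃ f : MvPolynomial (Fin d) ℝ, f.totalDegree ≤ 2 ∧
        Prod.fst '' SigmaSet d p p' =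
          {q : EuclideanSpace ℝ (Fin d) | MvPolynomial.eval (fun i => q i) f = 0} := by
  have hv := (affineIndependent_iff_linearIndependent_vsub ℝ p 0).1 hp
  have hv' := (affineIndependent_iff_linearIndependent_vsub ℝ p' 0).1 hp'
  simp only [vsub_eq_sub] at hv hv'
  obtain ⟨A, w, hAw⟩ := exists_linearEquiv_forall_inner_eq_iff hv hv' (by simp)
    fun i => (‖p' i‖ ^ 2 - ‖p' 0‖ ^ 2 - (‖p i‖ ^ 2 - ‖p 0‖ ^ 2)) / 2
  have hmem : ∀ q q', (q, q') ∈ SigmaSet d p p' ↔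
      q' = A q + w ∧ dist (p 0) q = dist (p' 0) (A q + w) := by
    intro q q'
    rw [SigmaSet, Set.mem_ofPred_eq, forall_dist_eq_iff p p' 0, and_comm, hAw]
    exact and_congr_right fun h => h ▸ Iff.rfl
  have hgraph : ∀ q q', (q, q') ∈ SigmaSet d p p' → q' = A q + w :=
    fun q q' h => ((hmem q q').1 h).1
  have hσ : Prod.fst '' SigmaSet d p p' = {q | dist (p 0) q = dist (p' 0) (A q + w)} := by
    ext q
    simp [hmem]
  obtain ⟨f, hf, hfeval⟩ :=
    (IsPolynomialOfDegreeLE.dist_sq IsPolynomialOfDegreeLE.coord (p 0)).sub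
      (IsPolynomialOfDegreeLE.dist_sq
        (IsPolynomialOfDegreeLE.linearMap_add_coord A.toLinearMap w) (p' 0))
  refine ⟨A, w, A.bijective, fun q q' => mem_iff_mem_image_fst_and_eq hgraph,
    image_image_fst_eq_image_snd hgraph, f, hf, ?_⟩
  rw [hσ]
  ext q
  simp [hfeval, sub_eq_zero, sq_eq_sq₀ dist_nonneg dist_nonneg]

/-- **Lemma 3.1.** Let `p, p'` be affinely independent `(d+1)`-tuples in `ℝ^d`, and
let `σ, σ'` be the projections of `Σ_{p,p'}` to the two factors. Then there is an
invertible affine transformation `T(q) = A q + w` of `ℝ^d` such that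
`(q, q') ∈ Σ_{p,p'} ↔ q ∈ σ ∧ q' = T q`, `T(σ) = σ'`, and `σ` is the zero set of a
polynomial of total degree at most `2` (a quadric). -/
theorem sigma_quadric_and_affine_map
    (d : ℕ) (hd : 1 ≤ d) (p p' : Fin (d + 1) → EuclideanSpace ℝ (Fin d))
    (hp : AffineIndependent ℝ p) (hp' : AffineIndependent ℝ p') :
    ∃ (A : EuclideanSpace ℝ (Fin d) →ₗ[ℝ] EuclideanSpace ℝ (Fin d))
      (w : EuclideanSpace ℝ (Fin d)),
      Function.Bijective A ∧
      (∀ q q' : EuclideanSpace ℝ (Fin d),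
        (q, q') ∈ SigmaSet d p p' ↔
          q ∈ Prod.fst '' SigmaSet d p p' ∧ q' = A q + w) ∧
      ((fun q => A q + w) '' (Prod.fst '' SigmaSet d p p') =
        Prod.snd '' SigmaSet d p p') ∧
      ∃ f : MvPolynomial (Fin d) ℝ, f.totalDegree ≤ 2 ∧
        Prod.fst '' SigmaSet d p p' =
          {q : EuclideanSpace ℝ (Fin d) | MvPolynomial.eval (fun i => q i) f = 0} :=
  sigma_quadric_and_affine_map_general d p p' hp hp'
end
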